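/- Let K₁ ≥ 1, and for k = 0,…,K₁−1 let D_k be an n×n real diagonal matrix with all diagonal entries in [−1,1] and W_k a d'×d' real matrix with nonnegative diagonal entries; assume s := ∑_{k=0}^{K₁−1} ‖W_kᵀ‖_∞ < 1. Let X be an n×d real matrix, V₀ a d×d' real matrix, and for k = 1,…,K₂−1 let E_k be an n×n real diagonal matrix with diagonal entries in [−1,1] and V_k a d×d' real matrix. Let Y* be the unique solution of Y* = ∑_{k=0}^{K₁−1} D_k Y* W_k + X V₀ and set O* = Y* + ∑_{k=1}^{K₂−1} E_k X V_k. Then max_{i,j} |O*_{ij}| ≤ ( ‖V₀ᵀ‖_∞ / (1 − s) + ∑_{k=1}^{K₂−1} ‖V_kᵀ‖_∞ ) · max_{i,j} |X_{ij}|. -/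

import Mathlib

/-
Measure matrices by the entrywise sup norm `‖·‖`. Left multiplication by a diagonal matrix
with entries in `[-1, 1]` does not increase it, and right multiplication by `B` scales it by
at most the largest column absolute sum `‖Bᵀ‖_∞` of `B`. Taking norms in the fixed-point
equation therefore gives `‖Y*‖ ≤ s ‖Y*‖ + ‖V₀ᵀ‖_∞ ‖X‖`, i.e. `‖Y*‖ ≤ ‖V₀ᵀ‖_∞ ‖X‖ / (1 - s)`,
and the skip terms `E_k X V_k` contribute at most `‖V_kᵀ‖_∞ ‖X‖` each.
-/

open scoped Matrix

/-- The ℓ∞–ℓ∞ operator norm of a real matrix: the maximum over rows of the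
sum of absolute values of the entries in that row. -/
noncomputable def infNorm {m n : Type*} [Fintype m] [Fintype n]
    (A : Matrix m n ℝ) : ℝ :=
  ⨆ i, ∑ j, |A i j|

attribute [local instance] Matrix.normedAddCommGroup

section MatrixBounds

variable {l m n : Type*} [Fintype l] [Fintype m] [Fintype n]

theorem iSup_iSup_abs_eq_norm (A : Matrix m n ℝ) : ⨆ i, ⨆ j, |A i j| = ‖A‖ := by
  refine le_antisymm
    (Real.iSup_le (fun i => Real.iSup_le (fun j => A.norm_entry_le_entrywise_sup_norm)
      (norm_nonneg A)) (norm_nonneg A)) ?_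
  have hbdd : ∀ i, BddAbove (Set.range fun j => |A i j|) := fun i => Finite.bddAbove_range _
  refine (Matrix.norm_le_iff
    (Real.iSup_nonneg fun i => Real.iSup_nonneg fun j => abs_nonneg (A i j))).2 fun i j => ?_
  exact (le_ciSup (hbdd i) j).trans
    (le_ciSup (f := fun i => ⨆ j, |A i j|) (Finite.bddAbove_range _) i)

theorem infNorm_nonneg (A : Matrix m n ℝ) : 0 ≤ infNorm A :=
  Real.iSup_nonneg fun _ => Finset.sum_nonneg fun _ _ => abs_nonneg _

theorem sum_abs_le_infNorm (A : Matrix m n ℝ) (i : m) : ∑ j, |A i j| ≤ infNorm A :=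
  le_ciSup (f := fun i => ∑ j, |A i j|) (Finite.bddAbove_range _) i

theorem norm_mul_le_norm_mul_infNorm_transpose (A : Matrix l m ℝ) (B : Matrix m n ℝ) :
    ‖A * B‖ ≤ ‖A‖ * infNorm Bᵀ := by
  refine (Matrix.norm_le_iff (mul_nonneg (norm_nonneg A) (infNorm_nonneg _))).2 fun i j => ?_
  calc ‖(A * B) i j‖ ≤ ∑ k, |A i k| * |B k j| := by
        simpa only [Matrix.mul_apply, Real.norm_eq_abs, abs_mul]
          using Finset.abs_sum_le_sum_abs (fun k => A i k * B k j) Finset.univ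
    _ ≤ ∑ k, ‖A‖ * |B k j| := by
        gcongr with k
        exact A.norm_entry_le_entrywise_sup_norm
    _ = ‖A‖ * ∑ k, |Bᵀ j k| := by rw [Finset.mul_sum]; rfl
    _ ≤ ‖A‖ * infNorm Bᵀ := by gcongr; exact sum_abs_le_infNorm Bᵀ j

theorem norm_diag_mul_le [DecidableEq m] {D : Matrix m m ℝ} (hD : D.IsDiag)
    (hD₁ : ∀ i, |D i i| ≤ 1) (A : Matrix m n ℝ) : ‖D * A‖ ≤ ‖A‖ := by
  refine (Matrix.norm_le_iff (norm_nonneg A)).2 fun i j => ?_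
  rw [← hD.diagonal_diag, Matrix.diagonal_mul, norm_mul]
  exact mul_le_of_le_one_left (norm_nonneg _) (hD₁ i) |>.trans A.norm_entry_le_entrywise_sup_norm

end MatrixBounds

section FixedPoint

variable {ι m n : Type*} [Fintype ι] [Fintype m] [DecidableEq m] [Fintype n]

theorem norm_le_of_eq_sum_diag_mul_mul_add {D : ι → Matrix m m ℝ} (hD : ∀ k, (D k).IsDiag)
    (hD₁ : ∀ k i, |D k i i| ≤ 1) {W : ι → Matrix n n ℝ} (hW : ∑ k, infNorm (W k)ᵀ < 1)
    {Y B : Matrix m n ℝ} (hY : Y = ∑ k, D k * Y * W k + B) :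
    ‖Y‖ ≤ ‖B‖ / (1 - ∑ k, infNorm (W k)ᵀ) := by
  have hcontract : ‖Y‖ ≤ (∑ k, infNorm (W k)ᵀ) * ‖Y‖ + ‖B‖ :=
    calc ‖Y‖ ≤ ∑ k, ‖D k * Y * W k‖ + ‖B‖ := by
          conv_lhs => rw [hY]
          exact (norm_add_le _ _).trans (by gcongr; exact norm_sum_le _ _)
      _ ≤ ∑ k, ‖Y‖ * infNorm (W k)ᵀ + ‖B‖ := by
          gcongr with k
          exact (norm_mul_le_norm_mul_infNorm_transpose _ _).trans
            (mul_le_mul_of_nonneg_right (norm_diag_mul_le (hD k) (hD₁ k) Y) (infNorm_nonneg _))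
      _ = (∑ k, infNorm (W k)ᵀ) * ‖Y‖ + ‖B‖ := by rw [Finset.sum_mul]; simp_rw [mul_comm]
  rw [le_div_iff₀ (sub_pos.2 hW)]
  linarith

end FixedPoint

theorem stgc_limit_upper_bound_general {n d d' K₁ K₂ : ℕ}
    (D : Fin K₁ → Matrix (Fin n) (Fin n) ℝ)
    (hDdiag : ∀ k, (D k).IsDiag)
    (hDbound : ∀ k r, D k r r ∈ Set.Icc (-1 : ℝ) 1)
    (W : Fin K₁ → Matrix (Fin d') (Fin d') ℝ)
    (hW : ∑ k, infNorm ((W k)ᵀ) < 1)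
    (X : Matrix (Fin n) (Fin d) ℝ) (V0 : Matrix (Fin d) (Fin d') ℝ)
    (E : Fin (K₂ - 1) → Matrix (Fin n) (Fin n) ℝ)
    (hEdiag : ∀ k, (E k).IsDiag)
    (hEbound : ∀ k r, E k r r ∈ Set.Icc (-1 : ℝ) 1)
    (V : Fin (K₂ - 1) → Matrix (Fin d) (Fin d') ℝ)
    (Ystar : Matrix (Fin n) (Fin d') ℝ)
    (hYstar : Ystar = ∑ k, D k * Ystar * W k + X * V0) :
    (⨆ i, ⨆ j, |(Ystar + ∑ k, E k * X * V k) i j|) ≤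
      (infNorm V0ᵀ / (1 - ∑ k, infNorm ((W k)ᵀ)) + ∑ k, infNorm ((V k)ᵀ)) *
        ⨆ i, ⨆ j, |X i j| := by
  simp only [iSup_iSup_abs_eq_norm]
  have hY : ‖Ystar‖ ≤ infNorm V0ᵀ / (1 - ∑ k, infNorm (W k)ᵀ) * ‖X‖ := by
    refine (norm_le_of_eq_sum_diag_mul_mul_add hDdiag (fun k i => abs_le.2 (hDbound k i)) hW
      hYstar).trans ?_
    rw [div_mul_eq_mul_div, mul_comm (infNorm _)]
    exact div_le_div_of_nonneg_right (norm_mul_le_norm_mul_infNorm_transpose X V0)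
      (sub_pos.2 hW).le
  have hskip : ∀ k, ‖E k * X * V k‖ ≤ infNorm (V k)ᵀ * ‖X‖ := fun k =>
    (norm_mul_le_norm_mul_infNorm_transpose _ _).trans <| by
      rw [mul_comm]
      exact mul_le_mul_of_nonneg_left
        (norm_diag_mul_le (hEdiag k) (fun i => abs_le.2 (hEbound k i)) X) (infNorm_nonneg _)
  calc ‖Ystar + ∑ k, E k * X * V k‖ ≤ ‖Ystar‖ + ∑ k, ‖E k * X * V k‖ :=
        (norm_add_le _ _).trans (by gcongr; exact norm_sum_le _ _)
    _ ≤ infNorm V0ᵀ / (1 - ∑ k, infNorm (W k)ᵀ) * ‖X‖ + ∑ k, infNorm (V k)ᵀ * ‖X‖ :=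
        add_le_add hY (Finset.sum_le_sum fun k _ => hskip k)
    _ = _ := by rw [add_mul, Finset.sum_mul]

/-- Upper bound on the limiting output of the spatio-temporal graph
convolution recursion: if `Y*` is the fixed point of
`Y* = ∑ k, D k * Y* * W k + X * V₀` and `O* = Y* + ∑ k, E k * X * V k`, then
`max |O*_{ij}| ≤ (‖V₀ᵀ‖_∞ / (1 - s) + ∑ k, ‖V kᵀ‖_∞) · max |X_{ij}|`
where `s = ∑ k, ‖(W k)ᵀ‖_∞ < 1`. -/
theorem stgc_limit_upper_bound {n d d' K₁ K₂ : ℕ} (hK₁ : 1 ≤ K₁)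
    (D : Fin K₁ → Matrix (Fin n) (Fin n) ℝ)
    (hDdiag : ∀ k, (D k).IsDiag)
    (hDbound : ∀ k r, D k r r ∈ Set.Icc (-1 : ℝ) 1)
    (W : Fin K₁ → Matrix (Fin d') (Fin d') ℝ)
    (hWdiag : ∀ k i, 0 ≤ W k i i)
    (hW : ∑ k, infNorm ((W k)ᵀ) < 1)
    (X : Matrix (Fin n) (Fin d) ℝ) (V0 : Matrix (Fin d) (Fin d') ℝ)
    (E : Fin (K₂ - 1) → Matrix (Fin n) (Fin n) ℝ)
    (hEdiag : ∀ k, (E k).IsDiag)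
    (hEbound : ∀ k r, E k r r ∈ Set.Icc (-1 : ℝ) 1)
    (V : Fin (K₂ - 1) → Matrix (Fin d) (Fin d') ℝ)
    (Ystar : Matrix (Fin n) (Fin d') ℝ)
    (hYstar : Ystar = ∑ k, D k * Ystar * W k + X * V0) :
    (⨆ i, ⨆ j, |(Ystar + ∑ k, E k * X * V k) i j|) ≤
      (infNorm V0ᵀ / (1 - ∑ k, infNorm ((W k)ᵀ)) + ∑ k, infNorm ((V k)ᵀ)) *
        ⨆ i, ⨆ j, |X i j| :=
  stgc_limit_upper_bound_general D hDdiag hDbound W hW X V0 E hEdiag hEbound V Ystar hYstar
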